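/- arXiv:2402.06061 — 6 statements merged into one kernel-verified Lean document; each statement's English description precedes it below -/
import Mathlib

section
/- The dissimilarity index D4 does not satisfy the triangle inequality: there exist 3×3 pairwise comparison matrices A, B, C such that D4(A,C) > D4(A,B) + D4(B,C). Concretely, one may take A with rows (1,2,1),(1/2,1,1),(1,1,1), B with rows (1,3,1),(1/3,1,1),(1,1,1), and C with rows (1,4,1),(1/4,1,1),(1,1,1), for which D4(A,B) = 1/6, D4(B,C) = 1/9, and D4(A,C) = 1/3 > 5/18. -/
/-!
Along the family `pcmFamily t`, which varies only the `(0,1)` entry, `D4` sees only the ratio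
`r = max (t / s) (s / t)` of those entries and equals `(r - 1) / 3`. Ratios compose
multiplicatively while `r - 1` is not subadditive under multiplication:
`(3/2) * (4/3) = 2`, yet `(3/2 - 1) + (4/3 - 1) = 5/6 < 1 = 2 - 1`.
-/

/-- An `n × n` real matrix is a pairwise comparison matrix (PCM) if all entries are
positive and it is reciprocal: `A j i = 1 / A i j`. -/
def IsPCM {n : ℕ} (A : Matrix (Fin n) (Fin n) ℝ) : Prop :=
  ∀ i j, 0 < A i j ∧ A j i = 1 / A i j

/-- The dissimilarity index `D4`, summing over the pairs `i < j` above the diagonal. -/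
noncomputable def D4 {n : ℕ} (A B : Matrix (Fin n) (Fin n) ℝ) : ℝ :=
  (2 / ((n : ℝ) * ((n : ℝ) - 1))) *
    ∑ i, ∑ j, if i < j then max (A i j * B j i) (A j i * B i j) - 1 else 0

noncomputable def pcmFamily (t : ℝ) : Matrix (Fin 3) (Fin 3) ℝ :=
  !![1, t, 1; 1/t, 1, 1; 1, 1, 1]

theorem isPCM_pcmFamily {t : ℝ} (ht : 0 < t) : IsPCM (pcmFamily t) := by
  intro i j
  fin_cases i <;> fin_cases j <;> simp [pcmFamily, ht]

theorem D4_fin_three (A B : Matrix (Fin 3) (Fin 3) ℝ) :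
    D4 A B = (max (A 0 1 * B 1 0) (A 1 0 * B 0 1) - 1
      + (max (A 0 2 * B 2 0) (A 2 0 * B 0 2) - 1)
      + (max (A 1 2 * B 2 1) (A 2 1 * B 1 2) - 1)) / 3 := by
  simp only [D4, Fin.sum_univ_three]
  norm_num [Fin.lt_def]
  ring

theorem D4_pcmFamily (t s : ℝ) :
    D4 (pcmFamily t) (pcmFamily s) = (max (t / s) (s / t) - 1) / 3 := by
  simp [D4_fin_three, pcmFamily, div_eq_mul_inv, mul_comm]

/-- `D4` does not satisfy the triangle inequality: for the concrete `3 × 3` PCMs below,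
`D4(A,B) = 1/6`, `D4(B,C) = 1/9`, `D4(A,C) = 1/3 > 5/18 = D4(A,B) + D4(B,C)`. -/
theorem D4_not_triangle_inequality :
    ∃ A B C : Matrix (Fin 3) (Fin 3) ℝ,
      A = !![1, 2, 1; 1/2, 1, 1; 1, 1, 1] ∧
      B = !![1, 3, 1; 1/3, 1, 1; 1, 1, 1] ∧
      C = !![1, 4, 1; 1/4, 1, 1; 1, 1, 1] ∧
      IsPCM A ∧ IsPCM B ∧ IsPCM C ∧
      D4 A B = 1/6 ∧ D4 B C = 1/9 ∧ D4 A C = 1/3 ∧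
      D4 A C > D4 A B + D4 B C := by
  have hAB : D4 (pcmFamily 2) (pcmFamily 3) = 1/6 := by
    rw [D4_pcmFamily]; norm_num
  have hBC : D4 (pcmFamily 3) (pcmFamily 4) = 1/9 := by
    rw [D4_pcmFamily]; norm_num
  have hAC : D4 (pcmFamily 2) (pcmFamily 4) = 1/3 := by
    rw [D4_pcmFamily]; norm_num
  refine ⟨pcmFamily 2, pcmFamily 3, pcmFamily 4, rfl, rfl, rfl,
    isPCM_pcmFamily two_pos, isPCM_pcmFamily three_pos, isPCM_pcmFamily four_pos,
    hAB, hBC, hAC, ?_⟩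
  rw [hAB, hBC, hAC]
  norm_num
end

section
/- The dissimilarity index D5 does not satisfy the triangle inequality: there exist 3×3 pairwise comparison matrices A, B, C such that D5(A,C) > D5(A,B) + D5(B,C). Concretely, one may take A with rows (1,2,1),(1/2,1,1),(1,1,1), B with rows (1,3,1),(1/3,1,1),(1,1,1), and C with rows (1,4,1),(1/4,1,1),(1,1,1), for which D5(A,B) = 1/2, D5(B,C) = 1/3, and D5(A,C) = 1 > 5/6. -/
/-- The dissimilarity index `D5(A,B) = max { A i j * B j i - 1 : 1 ≤ i, j ≤ n }`. -/
noncomputable def D5 {n : ℕ} (A B : Matrix (Fin n) (Fin n) ℝ) : ℝ :=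
  ⨆ i : Fin n, ⨆ j : Fin n, (A i j * B j i - 1)

lemma D5_le {n : ℕ} [NeZero n] (A B : Matrix (Fin n) (Fin n) ℝ) (c : ℝ)
    (h : ∀ i j, A i j * B j i - 1 ≤ c) : D5 A B ≤ c :=
  ciSup_le fun i => ciSup_le fun j => h i j

lemma le_D5 {n : ℕ} (A B : Matrix (Fin n) (Fin n) ℝ) (i j : Fin n) :
    A i j * B j i - 1 ≤ D5 A B :=
  le_trans
    (le_ciSup (f := fun j => A i j * B j i - 1) (Set.Finite.bddAbove (Set.finite_range _)) j)
    (le_ciSup (f := fun i => ⨆ j, (A i j * B j i - 1))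
      (Set.Finite.bddAbove (Set.finite_range _)) i)

lemma D5_eq {n : ℕ} (A B : Matrix (Fin n) (Fin n) ℝ) (c : ℝ)
    (i j : Fin n) (hij : A i j * B j i - 1 = c)
    (h : ∀ i j, A i j * B j i - 1 ≤ c) : D5 A B = c := by
  have : NeZero n := ⟨fun hn => by subst hn; exact i.elim0⟩
  exact le_antisymm (D5_le A B c h) (hij ▸ le_D5 A B i j)

/-- `D5` does not satisfy the triangle inequality: for the concrete `3 × 3` PCMs below,
`D5(A,B) = 1/2`, `D5(B,C) = 1/3`, `D5(A,C) = 1 > 5/6 = D5(A,B) + D5(B,C)`. -/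
theorem D5_not_triangle_inequality :
    ∃ A B C : Matrix (Fin 3) (Fin 3) ℝ,
      A = !![1, 2, 1; 1/2, 1, 1; 1, 1, 1] ∧
      B = !![1, 3, 1; 1/3, 1, 1; 1, 1, 1] ∧
      C = !![1, 4, 1; 1/4, 1, 1; 1, 1, 1] ∧
      IsPCM A ∧ IsPCM B ∧ IsPCM C ∧
      D5 A B = 1/2 ∧ D5 B C = 1/3 ∧ D5 A C = 1 ∧
      D5 A C > D5 A B + D5 B C := by
  have hab : D5 !![1, 2, 1; 1/2, 1, 1; 1, 1, 1] !![1, 3, 1; 1/3, 1, 1; (1:ℝ), 1, 1] = 1/2 :=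
    D5_eq _ _ _ 1 0 (by norm_num)
      (by intro i j; fin_cases i <;> fin_cases j <;> norm_num)
  have hbc : D5 !![1, 3, 1; 1/3, 1, 1; 1, 1, 1] !![1, 4, 1; 1/4, 1, 1; (1:ℝ), 1, 1] = 1/3 :=
    D5_eq _ _ _ 1 0 (by norm_num)
      (by intro i j; fin_cases i <;> fin_cases j <;> norm_num)
  have hac : D5 !![1, 2, 1; 1/2, 1, 1; 1, 1, 1] !![1, 4, 1; 1/4, 1, 1; (1:ℝ), 1, 1] = 1 :=
    D5_eq _ _ _ 1 0 (by norm_num)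
      (by intro i j; fin_cases i <;> fin_cases j <;> norm_num)
  refine ⟨!![1, 2, 1; 1/2, 1, 1; 1, 1, 1], !![1, 3, 1; 1/3, 1, 1; 1, 1, 1],
    !![1, 4, 1; 1/4, 1, 1; 1, 1, 1], rfl, rfl, rfl, ?_, ?_, ?_, hab, hbc, hac, ?_⟩
  · intro i j; fin_cases i <;> fin_cases j <;> norm_num
  · intro i j; fin_cases i <;> fin_cases j <;> norm_num
  · intro i j; fin_cases i <;> fin_cases j <;> norm_num
  · rw [hab, hbc, hac]; norm_num
end

section
/- The dissimilarity index D7 satisfies the triangle inequality: for all n×n pairwise comparison matrices A, B, C, one has D7(A,C) ≤ D7(A,B) + D7(B,C). -/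
/-- The dissimilarity index `D7(A,B) = -min { A i j * B j i - 1 : 1 ≤ i, j ≤ n }`. -/
noncomputable def D7 {n : ℕ} (A B : Matrix (Fin n) (Fin n) ℝ) : ℝ :=
  -(⨅ i : Fin n, ⨅ j : Fin n, (A i j * B j i - 1))

private lemma ciInf2_le {ι : Type*} [Fintype ι] (f : ι → ι → ℝ) (i j : ι) :
    (⨅ i, ⨅ j, f i j) ≤ f i j :=
  le_trans (ciInf_le (Set.Finite.bddBelow (Set.finite_range _)) i)
    (ciInf_le (Set.Finite.bddBelow (Set.finite_range _)) j)

/-- `D7` satisfies the triangle inequality on pairwise comparison matrices. -/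
theorem D7_triangle_inequality {n : ℕ} (A B C : Matrix (Fin n) (Fin n) ℝ)
    (hA : IsPCM A) (hB : IsPCM B) (hC : IsPCM C) :
    D7 A C ≤ D7 A B + D7 B C := by
  rcases n with _ | n
  · simp [D7, Real.iInf_of_isEmpty]
  set m1 := ⨅ i : Fin (n+1), ⨅ j, (A i j * B j i - 1) with hm1
  set m2 := ⨅ i : Fin (n+1), ⨅ j, (B i j * C j i - 1) with hm2
  have h1 : ∀ i j, m1 ≤ A i j * B j i - 1 := fun i j => ciInf2_le _ i j
  have h2 : ∀ i j, m2 ≤ B i j * C j i - 1 := fun i j => ciInf2_le _ i j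
  -- diagonal entries are 1
  have diag : ∀ (M : Matrix (Fin (n+1)) (Fin (n+1)) ℝ), IsPCM M → ∀ i, M i i = 1 := by
    intro M hM i
    have h := hM i i
    have hpos := h.1
    have heq := h.2
    field_simp at heq
    nlinarith [heq, hpos]
  have hm1le : m1 ≤ 0 := by
    have := h1 0 0
    rw [diag A hA 0, diag B hB 0] at this; linarith
  have hm2le : m2 ≤ 0 := by
    have := h2 0 0
    rw [diag B hB 0, diag C hC 0] at this; linarith
  have hm1ge : -1 ≤ m1 := by
    apply le_ciInf; intro i; apply le_ciInf; intro j
    nlinarith [(hA i j).1, (hB j i).1, mul_pos (hA i j).1 (hB j i).1]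
  have hm2ge : -1 ≤ m2 := by
    apply le_ciInf; intro i; apply le_ciInf; intro j
    nlinarith [(hB i j).1, (hC j i).1, mul_pos (hB i j).1 (hC j i).1]
  have key : m1 + m2 ≤ ⨅ i : Fin (n+1), ⨅ j, (A i j * C j i - 1) := by
    apply le_ciInf; intro i; apply le_ciInf; intro j
    have hAB : 1 + m1 ≤ A i j * B j i := by have := h1 i j; linarith
    have hBC : 1 + m2 ≤ B i j * C j i := by have := h2 i j; linarith
    have hBij : B i j * B j i = 1 := by
      have h := (hB i j).2
      have hpos := (hB i j).1
      rw [h]; field_simp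
    have hAC : A i j * B j i * (B i j * C j i) = A i j * C j i := by
      rw [show A i j * B j i * (B i j * C j i) = (B i j * B j i) * (A i j * C j i) from by ring,
        hBij, one_mul]
    have hmul : (1 + m1) * (1 + m2) ≤ A i j * B j i * (B i j * C j i) := by
      apply mul_le_mul hAB hBC (by linarith) (le_trans (by linarith) hAB)
    rw [hAC] at hmul
    nlinarith [mul_nonneg (neg_nonneg.2 hm1le) (neg_nonneg.2 hm2le)]
  simp only [D7]
  linarith [key]
end

section
/- The dissimilarity index D7 is a distance (metric) on the set of n×n pairwise comparison matrices: for all n×n PCMs A, B, C, one has D7(A,B) ≥ 0; D7(A,B) = 0 if and only if A = B; D7(A,B) = D7(B,A); and D7(A,C) ≤ D7(A,B) + D7(B,C). -/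
/-! Writing `m = 1 - D7 A B` for the smallest ratio `A i j / B i j = A i j * B j i`, reciprocity
makes the ratios closed under inversion, so `m ≤ 1`, with equality exactly when `A = B`. The ratios
for `(A, C)` are products of those for `(A, B)` and `(B, C)`, so `m_AC ≥ m_AB * m_BC`, and
`(1 - m_AB) * (1 - m_BC) ≥ 0` turns this into the triangle inequality. -/

theorem add_sub_one_le_mul {x y p q : ℝ} (hx : 0 < x) (hy : 0 < y) (hpx : p ≤ x) (hqy : q ≤ y)
    (hp : p ≤ 1) (hq : q ≤ 1) : p + q - 1 ≤ x * y := by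
  rcases le_or_gt p 0 with hp0 | hp0
  · nlinarith
  rcases le_or_gt q 0 with hq0 | hq0
  · nlinarith
  calc p + q - 1 ≤ p * q := by nlinarith
    _ ≤ x * y := mul_le_mul hpx hqy hq0.le hx.le

namespace IsPCM

variable {n : ℕ} {A : Matrix (Fin n) (Fin n) ℝ}

theorem pos (hA : IsPCM A) (i j : Fin n) : 0 < A i j := (hA i j).1

theorem mul_apply_swap (hA : IsPCM A) (i j : Fin n) : A i j * A j i = 1 := by
  rw [(hA i j).2, mul_one_div_cancel (hA.pos i j).ne']

theorem apply_self (hA : IsPCM A) (i : Fin n) : A i i = 1 := by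
  have h := hA.mul_apply_swap i i
  nlinarith [hA.pos i i]

end IsPCM

section D7

variable {n : ℕ} {A B C : Matrix (Fin n) (Fin n) ℝ}

theorem D7_of_isEmpty [IsEmpty (Fin n)] (A B : Matrix (Fin n) (Fin n) ℝ) : D7 A B = 0 := by
  simp [D7]

theorem one_sub_D7_le (A B : Matrix (Fin n) (Fin n) ℝ) (i j : Fin n) :
    1 - D7 A B ≤ A i j * B j i := by
  have h : (⨅ i, ⨅ j, (A i j * B j i - 1)) ≤ A i j * B j i - 1 :=
    (ciInf_le (Finite.bddBelow_range _) i).trans (ciInf_le (Finite.bddBelow_range _) j)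
  rw [D7]
  linarith

theorem D7_le_iff [Nonempty (Fin n)] {c : ℝ} :
    D7 A B ≤ c ↔ ∀ i j, 1 - c ≤ A i j * B j i := by
  rw [D7, neg_le, le_ciInf_iff (Finite.bddBelow_range _)]
  refine forall_congr' fun i => ?_
  rw [le_ciInf_iff (Finite.bddBelow_range _)]
  refine forall_congr' fun j => ?_
  constructor <;> intro h <;> linarith

theorem D7_comm (A B : Matrix (Fin n) (Fin n) ℝ) : D7 A B = D7 B A := by
  rcases isEmpty_or_nonempty (Fin n) with _ | _
  · simp only [D7_of_isEmpty]
  have le_swap (X Y : Matrix (Fin n) (Fin n) ℝ) : D7 X Y ≤ D7 Y X :=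
    D7_le_iff.2 fun i j => by simpa only [mul_comm] using one_sub_D7_le Y X j i
  exact le_antisymm (le_swap A B) (le_swap B A)

theorem D7_nonneg (hA : IsPCM A) (hB : IsPCM B) : 0 ≤ D7 A B := by
  rcases isEmpty_or_nonempty (Fin n) with _ | ⟨⟨i⟩⟩
  · exact (D7_of_isEmpty A B).ge
  have h := one_sub_D7_le A B i i
  rw [hA.apply_self, hB.apply_self, one_mul] at h
  linarith

theorem D7_self (hA : IsPCM A) : D7 A A = 0 := by
  simp [D7, hA.mul_apply_swap]

theorem eq_of_D7_eq_zero (hA : IsPCM A) (hB : IsPCM B) (h : D7 A B = 0) : A = B := by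
  ext i j
  have hij : 1 ≤ A i j * B j i := by simpa [h] using one_sub_D7_le A B i j
  have hji : 1 ≤ A j i * B i j := by simpa [h] using one_sub_D7_le A B j i
  have hprod : (A i j * B j i) * (A j i * B i j) = 1 := by
    linear_combination (B j i * B i j) * hA.mul_apply_swap i j + hB.mul_apply_swap j i
  have hratio : A i j * B j i = 1 := by nlinarith
  calc A i j = A i j * B j i * B i j := by
        rw [mul_assoc, hB.mul_apply_swap j i, mul_one]
    _ = B i j := by rw [hratio, one_mul]

theorem D7_eq_zero_iff (hA : IsPCM A) (hB : IsPCM B) : D7 A B = 0 ↔ A = B :=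
  ⟨eq_of_D7_eq_zero hA hB, fun h => h ▸ D7_self hA⟩

theorem D7_triangle (hA : IsPCM A) (hB : IsPCM B) (hC : IsPCM C) :
    D7 A C ≤ D7 A B + D7 B C := by
  rcases isEmpty_or_nonempty (Fin n) with _ | _
  · simp only [D7_of_isEmpty, add_zero, le_refl]
  refine D7_le_iff.2 fun i j => ?_
  have hratio : A i j * C j i = (A i j * B j i) * (B i j * C j i) := by
    linear_combination (-(A i j * C j i)) * hB.mul_apply_swap j i
  rw [hratio]
  have := add_sub_one_le_mul (mul_pos (hA.pos i j) (hB.pos j i)) (mul_pos (hB.pos i j) (hC.pos j i))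
    (one_sub_D7_le A B i j) (one_sub_D7_le B C i j)
    (by linarith [D7_nonneg hA hB]) (by linarith [D7_nonneg hB hC])
  linarith

end D7

/-- `D7` is a metric on the set of `n × n` pairwise comparison matrices:
nonnegativity, identity of indiscernibles, symmetry, and the triangle inequality. -/
theorem D7_is_metric {n : ℕ} (A B C : Matrix (Fin n) (Fin n) ℝ)
    (hA : IsPCM A) (hB : IsPCM B) (hC : IsPCM C) :
    0 ≤ D7 A B ∧ (D7 A B = 0 ↔ A = B) ∧ D7 A B = D7 B A ∧
      D7 A C ≤ D7 A B + D7 B C :=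
  ⟨D7_nonneg hA hB, D7_eq_zero_iff hA hB, D7_comm A B, D7_triangle hA hB hC⟩
end

section
/- For all n×n pairwise comparison matrices A and B, the normalised compatibility index satisfies D3(A,B) ≥ 0, D3(A,B) = D3(B,A), and D3(A,B) = 0 if and only if A = B. -/
/-- The normalised compatibility index `D3`. -/
noncomputable def D3 {n : ℕ} (A B : Matrix (Fin n) (Fin n) ℝ) : ℝ :=
  (1 / (n ^ 2 : ℝ)) * ∑ i, ∑ j, (A i j * B j i - 1)

lemma pair_nonneg (x : ℝ) (hx : 0 < x) : 0 ≤ (x - 1) + (1 / x - 1) := by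
  have h1 : x * (1 / x) = 1 := by field_simp
  nlinarith [sq_nonneg (x - 1)]

lemma pair_eq_one (x : ℝ) (hx : 0 < x) (h : (x - 1) + (1 / x - 1) = 0) : x = 1 := by
  have h1 : x * (1 / x) = 1 := by field_simp
  have h2 : (x - 1) ^ 2 = 0 := by nlinarith
  have := pow_eq_zero_iff (n := 2) (by norm_num) |>.mp h2
  linarith

/-- For PCMs `A` and `B`, `D3` is nonnegative, symmetric, and vanishes
exactly when `A = B`. -/
theorem D3_nonneg_symm_eq_zero_iff {n : ℕ} (A B : Matrix (Fin n) (Fin n) ℝ)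
    (hA : IsPCM A) (hB : IsPCM B) :
    0 ≤ D3 A B ∧ D3 A B = D3 B A ∧ (D3 A B = 0 ↔ A = B) := by
  set S := ∑ i, ∑ j, (A i j * B j i - 1) with hSdef
  have hx : ∀ i j : Fin n, 0 < A i j * B j i := fun i j =>
    mul_pos (hA i j).1 (hB j i).1
  have hinv : ∀ i j : Fin n, A j i * B i j = 1 / (A i j * B j i) := by
    intro i j
    rw [(hA i j).2, (hB j i).2]
    field_simp
  have h2S : 2 * S = ∑ i, ∑ j, ((A i j * B j i - 1) + (A j i * B i j - 1)) := by
    rw [hSdef]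
    rw [show (2 : ℝ) * (∑ i, ∑ j, (A i j * B j i - 1)) =
        (∑ i, ∑ j, (A i j * B j i - 1)) + (∑ i, ∑ j, (A i j * B j i - 1)) by ring]
    nth_rewrite 2 [Finset.sum_comm]
    rw [← Finset.sum_add_distrib]
    exact Finset.sum_congr rfl fun i _ => by rw [← Finset.sum_add_distrib]
  have hterm : ∀ i j : Fin n, 0 ≤ (A i j * B j i - 1) + (A j i * B i j - 1) := by
    intro i j
    rw [hinv i j]
    exact pair_nonneg _ (hx i j)
  have hSnn : 0 ≤ S := by
    have : 0 ≤ 2 * S := h2S ▸ Finset.sum_nonneg fun i _ =>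
      Finset.sum_nonneg fun j _ => hterm i j
    linarith
  have hsymm : D3 A B = D3 B A := by
    unfold D3
    congr 1
    rw [Finset.sum_comm]
    exact Finset.sum_congr rfl fun i _ => Finset.sum_congr rfl fun j _ => by
      rw [mul_comm]
  refine ⟨?_, hsymm, ?_⟩
  · exact mul_nonneg (by positivity) hSnn
  · rcases Nat.eq_zero_or_pos n with hn | hn
    · subst hn
      constructor
      · intro _
        ext i j; exact i.elim0
      · intro _
        simp [D3]
    · have hc : (1 / (n ^ 2 : ℝ)) ≠ 0 := by positivity
      constructor
      · intro h
        have hS0 : S = 0 := by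
          rcases mul_eq_zero.mp h with h' | h'
          · exact absurd h' hc
          · exact h'
        have h2S0 : ∑ i, ∑ j, ((A i j * B j i - 1) + (A j i * B i j - 1)) = 0 := by
          rw [← h2S, hS0]; ring
        have hall : ∀ i ∈ Finset.univ, ∀ j ∈ (Finset.univ : Finset (Fin n)),
            (A i j * B j i - 1) + (A j i * B i j - 1) = 0 := by
          have := (Finset.sum_eq_zero_iff_of_nonneg fun i _ =>
            Finset.sum_nonneg fun j _ => hterm i j).mp h2S0
          intro i hi j hj
          exact (Finset.sum_eq_zero_iff_of_nonneg fun j _ => hterm i j).mp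
            (this i hi) j hj
        ext i j
        have h1 := hall i (Finset.mem_univ i) j (Finset.mem_univ j)
        rw [hinv i j] at h1
        have : A i j * B j i = 1 := pair_eq_one _ (hx i j) h1
        have hBpos := (hB j i).1
        have : A i j = 1 / B j i := by
          field_simp at this ⊢
          linarith [this]
        rw [this, ← (hB j i).2]
      · intro h
        subst h
        have : S = 0 := by
          apply Finset.sum_eq_zero
          intro i _
          apply Finset.sum_eq_zero
          intro j _
          rw [(hA j i).2, one_div_mul_cancel (ne_of_gt (hA j i).1), sub_self]
        rw [D3, ← hSdef, this, mul_zero]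
end

section
/- The unique solution of the Logarithmic Least Squares (LLSM) problem for an n×n pairwise comparison matrix is given by the geometric means of the rows: if A = [a_ij] is an n×n PCM, then the positive weight vector w = (w_1,…,w_n) with Σ_i w_i = 1 minimizing Σ_{i,j} ( log(a_ij) − log(w_i/w_j) )² is the unique normalized vector satisfying w_i / w_j = (Π_{k=1}^n a_ik)^{1/n} / (Π_{k=1}^n a_jk)^{1/n} for all i, j; equivalently, the normalized vector of row geometric means is the unique minimizer. -/
/-- The LLSM objective function: `w ↦ Σᵢⱼ (log aᵢⱼ - log (wᵢ / wⱼ))²`. -/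
noncomputable def llsmObj {n : ℕ} (A : Matrix (Fin n) (Fin n) ℝ) (w : Fin n → ℝ) : ℝ :=
  ∑ i, ∑ j, (Real.log (A i j) - Real.log (w i / w j)) ^ 2

/-- The normalized vector of row geometric means of `A`. -/
noncomputable def gmWeights {n : ℕ} (A : Matrix (Fin n) (Fin n) ℝ) : Fin n → ℝ :=
  fun i => (∏ k, A i k) ^ ((1 : ℝ) / n) / ∑ l, (∏ k, A l k) ^ ((1 : ℝ) / n)

/-!
Taking logarithms turns the LLSM problem into the linear least-squares problem of fitting an
antisymmetric matrix `L = log A` by differences `xᵢ - xⱼ`. The row averages `y` of `L` solve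
its normal equations `Σⱼ (Lᵢⱼ - (yᵢ - yⱼ)) = 0`, and since the residual `Lᵢⱼ - (yᵢ - yⱼ)` is
antisymmetric with zero row sums, it is orthogonal to every difference pattern `dᵢ - dⱼ`.
Pythagoras then gives `Σ (Lᵢⱼ - (xᵢ - xⱼ))² = Σ (Lᵢⱼ - (yᵢ - yⱼ))² + Σ ((xᵢ - yᵢ) - (xⱼ - yⱼ))²`,
so the minimizers are exactly the `x` with `x - y` constant. The log of the row geometric
mean is the row average of `log A`, and the normalization `Σ wᵢ = 1` fixes the constant.
-/

open Finset Real

section DifferenceFit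

variable {ι : Type*} [Fintype ι]

noncomputable def diffFitError (L : ι → ι → ℝ) (x : ι → ℝ) : ℝ :=
  ∑ i, ∑ j, (L i j - (x i - x j)) ^ 2

noncomputable def rowAvg (L : ι → ι → ℝ) (i : ι) : ℝ :=
  (∑ j, L i j) / Fintype.card ι

lemma sum_sum_mul_sub_eq_zero {e : ι → ι → ℝ} (he : ∀ i j, e j i = -e i j)
    (hrow : ∀ i, ∑ j, e i j = 0) (d : ι → ℝ) :
    ∑ i, ∑ j, e i j * (d i - d j) = 0 := by
  have hcol : ∀ j, ∑ i, e i j = 0 := fun j => by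
    simp only [he j, sum_neg_distrib, hrow, neg_zero]
  calc ∑ i, ∑ j, e i j * (d i - d j)
      = ∑ i, (∑ j, e i j) * d i - ∑ j, (∑ i, e i j) * d j := by
        simp only [mul_sub, sum_sub_distrib, sum_mul]
        rw [sum_comm (f := fun i j => e i j * d j)]
    _ = 0 := by simp only [hrow, hcol, zero_mul, sum_const_zero, sub_zero]

lemma diffFitError_eq_add {L : ι → ι → ℝ} (hL : ∀ i j, L j i = -L i j) {z : ι → ℝ}
    (hz : ∀ i, ∑ j, (L i j - (z i - z j)) = 0) (x : ι → ℝ) :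
    diffFitError L x =
      diffFitError L z + ∑ i, ∑ j, ((x i - z i) - (x j - z j)) ^ 2 := by
  have hcross := sum_sum_mul_sub_eq_zero (e := fun i j => L i j - (z i - z j))
    (fun i j => by simp only [hL i j]; ring) hz (x - z)
  have hexpand : ∀ i j, (L i j - (x i - x j)) ^ 2 = (L i j - (z i - z j)) ^ 2
      + ((x i - z i) - (x j - z j)) ^ 2
      - 2 * ((L i j - (z i - z j)) * ((x - z) i - (x - z) j)) := fun i j => by
    simp only [Pi.sub_apply]; ring
  simp only [diffFitError, hexpand, sum_sub_distrib, sum_add_distrib, ← mul_sum, hcross,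
    mul_zero, sub_zero]

lemma sum_rowAvg_eq_zero {L : ι → ι → ℝ} (hL : ∀ i j, L j i = -L i j) :
    ∑ i, rowAvg L i = 0 := by
  have htotal : ∑ i, ∑ j, L i j = -∑ i, ∑ j, L i j := by
    calc ∑ i, ∑ j, L i j = ∑ j, ∑ i, L i j := sum_comm
      _ = ∑ j, ∑ i, -L j i := sum_congr rfl fun j _ => sum_congr rfl fun i _ => hL j i
      _ = -∑ i, ∑ j, L i j := by simp only [sum_neg_distrib]
  simp only [rowAvg]
  rw [← sum_div, (by linarith : ∑ i, ∑ j, L i j = 0), zero_div]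

lemma sum_sub_sub_eq_zero_of_sub_eq_rowAvg_sub [Nonempty ι] {L : ι → ι → ℝ}
    (hL : ∀ i j, L j i = -L i j) {z : ι → ℝ}
    (hz : ∀ i j, z i - z j = rowAvg L i - rowAvg L j) (i : ι) :
    ∑ j, (L i j - (z i - z j)) = 0 := by
  have hcard : (Fintype.card ι : ℝ) ≠ 0 := Nat.cast_ne_zero.mpr Fintype.card_ne_zero
  simp only [hz, sum_sub_distrib, sum_const, card_univ, nsmul_eq_mul, sum_rowAvg_eq_zero hL]
  rw [rowAvg]
  field_simp
  ring

end DifferenceFit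

lemma sum_sum_sq_sub_eq_zero_iff {ι : Type*} [Fintype ι] {x : ι → ℝ} :
    ∑ i, ∑ j, (x i - x j) ^ 2 = 0 ↔ ∀ i j, x i = x j := by
  simp only [Fintype.sum_eq_zero_iff_of_nonneg (fun _ => sum_nonneg fun _ _ => sq_nonneg _),
    funext_iff, Pi.zero_apply, Fintype.sum_eq_zero_iff_of_nonneg (fun _ => sq_nonneg _),
    sq_eq_zero_iff, sub_eq_zero]

lemma eq_of_div_eq_div_of_sum_eq {ι : Type*} [Fintype ι] {w v : ι → ℝ}
    (hw : ∀ i, 0 < w i) (hv : ∀ i, 0 < v i) (hsum : ∑ i, w i = ∑ i, v i)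
    (h : ∀ i j, w i / w j = v i / v j) : w = v := by
  funext i
  have hcross : ∀ j, w i * v j = v i * w j := fun j =>
    (div_eq_div_iff (hw j).ne' (hv j).ne').mp (h i j)
  have hv_sum : 0 < ∑ j, v j := sum_pos (fun j _ => hv j) ⟨i, mem_univ i⟩
  refine mul_right_cancel₀ hv_sum.ne' ?_
  rw [mul_sum, sum_congr rfl fun j _ => hcross j, ← mul_sum, hsum]

lemma Real.div_eq_div_of_log_sub_log_eq {a b c d : ℝ} (ha : 0 < a) (hb : 0 < b) (hc : 0 < c)
    (hd : 0 < d) (h : log a - log b = log c - log d) : a / b = c / d := by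
  rw [← log_div ha.ne' hb.ne', ← log_div hc.ne' hd.ne'] at h
  exact log_injOn_pos (div_pos ha hb) (div_pos hc hd) h

section PCM

variable {n : ℕ} {A : Matrix (Fin n) (Fin n) ℝ}

lemma IsPCM.log_antisymm (hA : IsPCM A) (i j : Fin n) :
    log (A j i) = -log (A i j) := by
  rw [(hA i j).2, one_div, log_inv]

lemma llsmObj_eq_diffFitError {w : Fin n → ℝ} (hw : ∀ i, 0 < w i) :
    llsmObj A w = diffFitError (fun i j => log (A i j)) (fun i => log (w i)) := by
  simp only [llsmObj, diffFitError, log_div (hw _).ne' (hw _).ne']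

lemma rowGeomMean_pos (hpos : ∀ i j, 0 < A i j) (i : Fin n) :
    0 < (∏ k, A i k) ^ ((1 : ℝ) / n) :=
  rpow_pos_of_pos (prod_pos fun k _ => hpos i k) _

lemma sum_rowGeomMean_pos (hpos : ∀ i j, 0 < A i j) (hn : 0 < n) :
    0 < ∑ l, (∏ k, A l k) ^ ((1 : ℝ) / n) :=
  sum_pos (fun l _ => rowGeomMean_pos hpos l) ⟨⟨0, hn⟩, mem_univ _⟩

lemma log_rowGeomMean (hpos : ∀ i j, 0 < A i j) (i : Fin n) :
    log ((∏ k, A i k) ^ ((1 : ℝ) / n)) = rowAvg (fun i j => log (A i j)) i := by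
  rw [log_rpow (prod_pos fun k _ => hpos i k), log_prod fun k _ => (hpos i k).ne', rowAvg,
    Fintype.card_fin]
  ring

lemma gmWeights_pos (hpos : ∀ i j, 0 < A i j) (hn : 0 < n) (i : Fin n) :
    0 < gmWeights A i :=
  div_pos (rowGeomMean_pos hpos i) (sum_rowGeomMean_pos hpos hn)

lemma sum_gmWeights (hpos : ∀ i j, 0 < A i j) (hn : 0 < n) : ∑ i, gmWeights A i = 1 := by
  unfold gmWeights
  rw [← sum_div, div_self (sum_rowGeomMean_pos hpos hn).ne']

lemma gmWeights_div_gmWeights (hpos : ∀ i j, 0 < A i j) (hn : 0 < n) (i j : Fin n) :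
    gmWeights A i / gmWeights A j =
      (∏ k, A i k) ^ ((1 : ℝ) / n) / (∏ k, A j k) ^ ((1 : ℝ) / n) := by
  unfold gmWeights
  rw [div_div_div_cancel_right₀ (sum_rowGeomMean_pos hpos hn).ne']

lemma log_gmWeights_sub (hpos : ∀ i j, 0 < A i j) (hn : 0 < n) (i j : Fin n) :
    log (gmWeights A i) - log (gmWeights A j) =
      rowAvg (fun i j => log (A i j)) i - rowAvg (fun i j => log (A i j)) j := by
  rw [← log_div (gmWeights_pos hpos hn i).ne' (gmWeights_pos hpos hn j).ne',
    gmWeights_div_gmWeights hpos hn, log_div (rowGeomMean_pos hpos i).ne'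
    (rowGeomMean_pos hpos j).ne', log_rowGeomMean hpos, log_rowGeomMean hpos]

theorem IsPCM.llsmObj_eq_llsmObj_gmWeights_add (hA : IsPCM A) (hn : 0 < n)
    {w : Fin n → ℝ} (hw : ∀ i, 0 < w i) :
    llsmObj A w = llsmObj A (gmWeights A) +
      ∑ i, ∑ j, ((log (w i) - log (gmWeights A i)) - (log (w j) - log (gmWeights A j))) ^ 2 := by
  have hpos : ∀ i j, 0 < A i j := fun i j => (hA i j).1
  have : Nonempty (Fin n) := ⟨⟨0, hn⟩⟩
  rw [llsmObj_eq_diffFitError hw, llsmObj_eq_diffFitError (gmWeights_pos hpos hn)]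
  exact diffFitError_eq_add hA.log_antisymm
    (sum_sub_sub_eq_zero_of_sub_eq_rowAvg_sub hA.log_antisymm (log_gmWeights_sub hpos hn)) _

end PCM

/-- The unique solution of the LLSM problem for a PCM is the normalized vector of the
row geometric means: it is a feasible weight vector, it minimizes the LLSM objective
among all positive normalized weight vectors, every minimizer equals it, and a feasible
vector minimizes the objective iff its ratios are the ratios of row geometric means. -/
theorem llsm_unique_solution_is_geometric_mean {n : ℕ} (hn : 0 < n)
    (A : Matrix (Fin n) (Fin n) ℝ) (hA : IsPCM A) :
    (∀ i, 0 < gmWeights A i) ∧ (∑ i, gmWeights A i = 1) ∧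
    (∀ w : Fin n → ℝ, (∀ i, 0 < w i) → (∑ i, w i = 1) →
      llsmObj A (gmWeights A) ≤ llsmObj A w) ∧
    (∀ w : Fin n → ℝ, (∀ i, 0 < w i) → (∑ i, w i = 1) →
      llsmObj A w = llsmObj A (gmWeights A) → w = gmWeights A) ∧
    (∀ w : Fin n → ℝ, (∀ i, 0 < w i) → (∑ i, w i = 1) →
      ((∀ i j, w i / w j =
          (∏ k, A i k) ^ ((1 : ℝ) / n) / (∏ k, A j k) ^ ((1 : ℝ) / n)) ↔
        w = gmWeights A)) := by
  have hpos : ∀ i j, 0 < A i j := fun i j => (hA i j).1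
  have hg := gmWeights_pos hpos hn
  have eq_of_ratios : ∀ w : Fin n → ℝ, (∀ i, 0 < w i) → ∑ i, w i = 1 →
      (∀ i j, w i / w j = gmWeights A i / gmWeights A j) → w = gmWeights A :=
    fun w hw hsum => eq_of_div_eq_div_of_sum_eq hw hg (hsum.trans (sum_gmWeights hpos hn).symm)
  refine ⟨hg, sum_gmWeights hpos hn, fun w hw _ => ?_, fun w hw hsum hmin => ?_,
    fun w hw hsum => ?_⟩
  · rw [hA.llsmObj_eq_llsmObj_gmWeights_add hn hw]
    exact le_add_of_nonneg_right (by positivity)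
  · rw [hA.llsmObj_eq_llsmObj_gmWeights_add hn hw, add_eq_left,
      sum_sum_sq_sub_eq_zero_iff] at hmin
    exact eq_of_ratios w hw hsum fun i j =>
      div_eq_div_of_log_sub_log_eq (hw i) (hw j) (hg i) (hg j) (by linarith [hmin i j])
  · simp only [← gmWeights_div_gmWeights hpos hn]
    exact ⟨eq_of_ratios w hw hsum, fun h i j => by rw [h]⟩
end
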